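/- arXiv:2602.15022 — 2 statements merged into one kernel-verified Lean document; each statement's English description precedes it below -/
import Mathlib

section
/- Let G be a compact group acting orthogonally on ℝ^d, let G ~ λ (Haar) be independent of the pair (Z̃₀, Z̃₁) of square-integrable ℝ^d-valued random vectors, and set Z_t = (1−t) G·Z̃₀ + t G·Z̃₁, Z̃_t = (1−t)Z̃₀ + tZ̃₁, U = G·(Z̃₁ − Z̃₀), Δ = Z̃₁ − Z̃₀ for fixed t ∈ [0,1]. Then Var(U | Z_t) = E[Var(Δ | Z̃_t) | Z_t] + Var(E[U | Z_t, G] | Z_t) almost surely, and consequently E[Var(U | Z_t)] ≥ E[Var(Δ | Z̃_t)]. -/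
/-!
Since `G` acts by isometries and `Z_t = G·Z̃_t`, the pairs `(Z_t, G)` and `(Z̃_t, G)` generate the
same σ-algebra. As `G` is independent of `(Z̃₀, Z̃₁)`, conditioning `Δ` on `(Z̃_t, G)` is the same as
conditioning it on `Z̃_t`, so `E[U | Z_t, G] = G·E[Δ | Z̃_t]` and, by isometry,
`Var(U | Z_t, G) = Var(Δ | Z̃_t)`. The law of total variance for `σ(Z_t) ⊆ σ(Z_t, G)` then gives
the decomposition, and integrating it gives the inequality.
-/

open MeasureTheory ProbabilityTheory
open scoped InnerProductSpace

section

variable {α E : Type*} [NormedAddCommGroup E] [NormedSpace ℝ E] {m m₁ m₂ m0 : MeasurableSpace α}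
  {μ : Measure α}

theorem setIntegral_eq_of_isPiSystem {S : Set (Set α)} (hm : m ≤ m0)
    (hgen : m = MeasurableSpace.generateFrom S) (hS : IsPiSystem S) {f g : α → E}
    (hf : Integrable f μ) (hg : Integrable g μ) (huniv : ∫ x, f x ∂μ = ∫ x, g x ∂μ)
    (hbasic : ∀ s ∈ S, ∫ x in s, f x ∂μ = ∫ x in s, g x ∂μ) {s : Set α}
    (hs : MeasurableSet[m] s) : ∫ x in s, f x ∂μ = ∫ x in s, g x ∂μ := by
  induction s, hs using MeasurableSpace.induction_on_inter hgen hS with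
  | empty => simp
  | basic s hs => exact hbasic s hs
  | compl s hs ih => rw [setIntegral_compl (hm s hs) hf, setIntegral_compl (hm s hs) hg, ih, huniv]
  | iUnion s hdisj hs ih =>
    rw [integral_iUnion (fun i => hm _ (hs i)) hdisj hf.integrableOn,
      integral_iUnion (fun i => hm _ (hs i)) hdisj hg.integrableOn]
    exact tsum_congr ih

theorem MeasurableSpace.sup_eq_generateFrom_image2_inter (m₁ m₂ : MeasurableSpace α) :
    m₁ ⊔ m₂ = generateFrom
      (Set.image2 (· ∩ ·) {s | MeasurableSet[m₁] s} {s | MeasurableSet[m₂] s}) := by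
  refine le_antisymm (sup_le (fun s hs => ?_) (fun s hs => ?_)) (generateFrom_le ?_)
  · exact measurableSet_generateFrom ⟨s, hs, Set.univ, MeasurableSet.univ, Set.inter_univ s⟩
  · exact measurableSet_generateFrom ⟨Set.univ, MeasurableSet.univ, s, hs, Set.univ_inter s⟩
  · rintro _ ⟨s₁, h₁, s₂, h₂, rfl⟩
    exact (le_sup_left (b := m₂) s₁ h₁).inter (le_sup_right (a := m₁) s₂ h₂)

theorem MeasurableSpace.isPiSystem_image2_inter (m₁ m₂ : MeasurableSpace α) :
    IsPiSystem (Set.image2 (· ∩ ·) {s | MeasurableSet[m₁] s} {s | MeasurableSet[m₂] s}) := by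
  rintro _ ⟨s₁, h₁, s₂, h₂, rfl⟩ _ ⟨t₁, h₁', t₂, h₂', rfl⟩ -
  exact ⟨s₁ ∩ t₁, h₁.inter h₁', s₂ ∩ t₂, h₂.inter h₂', Set.inter_inter_inter_comm s₁ t₁ s₂ t₂⟩

theorem setIntegral_eq_on_sup_of_forall_inter (hm₁ : m₁ ≤ m0) (hm₂ : m₂ ≤ m0) {f g : α → E}
    (hf : Integrable f μ) (hg : Integrable g μ)
    (hbasic : ∀ s₁ s₂, MeasurableSet[m₁] s₁ → MeasurableSet[m₂] s₂ →
      ∫ x in s₁ ∩ s₂, f x ∂μ = ∫ x in s₁ ∩ s₂, g x ∂μ)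
    {s : Set α} (hs : MeasurableSet[m₁ ⊔ m₂] s) : ∫ x in s, f x ∂μ = ∫ x in s, g x ∂μ := by
  refine setIntegral_eq_of_isPiSystem (sup_le hm₁ hm₂)
    (MeasurableSpace.sup_eq_generateFrom_image2_inter m₁ m₂)
    (MeasurableSpace.isPiSystem_image2_inter m₁ m₂) hf hg ?_ ?_ hs
  · simpa using hbasic _ _ MeasurableSet.univ MeasurableSet.univ
  · rintro _ ⟨s₁, h₁, s₂, h₂, rfl⟩
    exact hbasic s₁ s₂ h₁ h₂

variable [CompleteSpace E] [IsFiniteMeasure μ]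

theorem setIntegral_eq_measureReal_smul_integral_of_indep (hm₁ : m₁ ≤ m0) (hm₂ : m₂ ≤ m0)
    (hind : Indep m₁ m₂ μ) {f : α → E} (hf : StronglyMeasurable[m₁] f) (hfi : Integrable f μ)
    {s : Set α} (hs : MeasurableSet[m₂] s) : ∫ x in s, f x ∂μ = μ.real s • ∫ x, f x ∂μ :=
  calc ∫ x in s, f x ∂μ = ∫ x in s, (μ[f | m₂]) x ∂μ := (setIntegral_condExp hm₂ hfi hs).symm
    _ = ∫ _ in s, (∫ x, f x ∂μ) ∂μ :=
      integral_congr_ae (ae_restrict_of_ae (condExp_indep_eq hm₁ hm₂ hf hind))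
    _ = μ.real s • ∫ x, f x ∂μ := setIntegral_const _

theorem condExp_sup_indep_eq {mA : MeasurableSpace α} (hmA : mA ≤ m0) (hm₂ : m₂ ≤ m0)
    (hm : m ≤ mA) (hind : Indep mA m₂ μ) {f : α → E} (hf : StronglyMeasurable[mA] f) :
    μ[f | m ⊔ m₂] =ᵐ[μ] μ[f | m] := by
  by_cases hfi : Integrable f μ
  swap; · simp [condExp_of_not_integrable hfi]
  have hm0 : m ≤ m0 := hm.trans hmA
  have hmeas : StronglyMeasurable[m ⊔ m₂] (μ[f | m]) := stronglyMeasurable_condExp.mono le_sup_left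
  refine (ae_eq_condExp_of_forall_setIntegral_eq (sup_le hm0 hm₂) hfi
    (fun s _ _ => integrable_condExp.integrableOn) (fun s hs _ => ?_)
    hmeas.aestronglyMeasurable).symm
  refine setIntegral_eq_on_sup_of_forall_inter hm0 hm₂ integrable_condExp hfi
    (fun s₁ s₂ h₁ h₂ => ?_) hs
  have hsplit : ∀ h : α → E, StronglyMeasurable[mA] h → Integrable h μ →
      ∫ x in s₁ ∩ s₂, h x ∂μ = μ.real s₂ • ∫ x in s₁, h x ∂μ := fun h hh hhi => by
    rw [Set.inter_comm, ← setIntegral_indicator (hm0 _ h₁),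
      setIntegral_eq_measureReal_smul_integral_of_indep hmA hm₂ hind (hh.indicator (hm _ h₁))
        (hhi.indicator (hm0 _ h₁)) h₂, integral_indicator (hm0 _ h₁)]
  rw [hsplit _ (stronglyMeasurable_condExp.mono hm) integrable_condExp, hsplit f hf hfi,
    setIntegral_condExp hm0 hfi h₁]

theorem condExp_apply_sup_indep_eq {F : Type*} [NormedAddCommGroup F] [NormedSpace ℝ F]
    [CompleteSpace F] {mA : MeasurableSpace α} (hmA : mA ≤ m0) (hm₂ : m₂ ≤ m0) (hm : m ≤ mA)
    (hind : Indep mA m₂ μ) {A : α → F →L[ℝ] E} {f : α → F} (hA : StronglyMeasurable[m₂] A)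
    (hf : StronglyMeasurable[mA] f) (hAf : Integrable (fun x => A x (f x)) μ)
    (hfi : Integrable f μ) :
    μ[fun x => A x (f x) | m ⊔ m₂] =ᵐ[μ] fun x => A x ((μ[f | m]) x) := by
  filter_upwards [condExp_bilin_of_stronglyMeasurable_left (m := m ⊔ m₂) (.id ℝ (F →L[ℝ] E))
    (hA.mono le_sup_right) hAf hfi, condExp_sup_indep_eq hmA hm₂ hm hind hf] with x hx hx'
  rw [← hx']
  exact hx

end

noncomputable def condVarNorm {α E : Type*} {m0 : MeasurableSpace α} [NormedAddCommGroup E]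
    [NormedSpace ℝ E] [CompleteSpace E] (m : MeasurableSpace α) (f : α → E) (μ : Measure[m0] α) :
    α → ℝ :=
  μ[fun x => ‖f x - (μ[f | m]) x‖ ^ 2 | m]

section

variable {α E : Type*} [NormedAddCommGroup E] [InnerProductSpace ℝ E]
  {m m' m0 : MeasurableSpace α} {μ : Measure α}

theorem MeasureTheory.MemLp.integrable_inner {f g : α → E} (hf : MemLp f 2 μ) (hg : MemLp g 2 μ) :
    Integrable (fun x => ⟪f x, g x⟫_ℝ) μ :=
  memLp_one_iff_integrable.1 ((innerSL ℝ).memLp_of_bilin 1 hf hg)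

variable [CompleteSpace E] [IsFiniteMeasure μ]

theorem condExp_inner_sub_condExp_ae_eq_zero (hm : m ≤ m0) {f g : α → E}
    (hg : StronglyMeasurable[m] g) (hg2 : MemLp g 2 μ) (hf : MemLp f 2 μ) :
    μ[fun x => ⟪g x, f x - (μ[f | m]) x⟫_ℝ | m] =ᵐ[μ] 0 := by
  have hfi : Integrable f μ := hf.integrable one_le_two
  have hres : μ[f - μ[f | m] | m] =ᵐ[μ] 0 := by
    filter_upwards [condExp_sub hfi integrable_condExp m] with x hx
    rw [hx, condExp_of_stronglyMeasurable hm stronglyMeasurable_condExp integrable_condExp,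
      Pi.sub_apply, sub_self, Pi.zero_apply]
  filter_upwards [condExp_bilin_of_stronglyMeasurable_left (g := f - μ[f | m]) (innerSL ℝ) hg
    (hg2.integrable_inner (hf.sub (hf.condExp one_le_two))) (hfi.sub integrable_condExp),
    hres] with x hx hx'
  rw [Pi.zero_apply] at hx' ⊢
  exact hx.trans (by rw [hx', map_zero])

/-- The law of total variance. -/
theorem condVarNorm_ae_eq_condExp_condVarNorm_add (hm : m ≤ m') (hm' : m' ≤ m0) {f : α → E}
    (hf : MemLp f 2 μ) :
    condVarNorm m f μ =ᵐ[μ] fun x =>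
      (μ[condVarNorm m' f μ | m]) x + (μ[fun x => ‖(μ[f | m']) x - (μ[f | m]) x‖ ^ 2 | m]) x := by
  set g := μ[f | m'] - μ[f | m]
  have hg2 : MemLp g 2 μ := (hf.condExp one_le_two).sub (hf.condExp one_le_two)
  have hr2 : MemLp (f - μ[f | m']) 2 μ := hf.sub (hf.condExp one_le_two)
  have hgm : StronglyMeasurable[m'] g :=
    stronglyMeasurable_condExp.sub (stronglyMeasurable_condExp.mono hm)
  have hsq : ∀ {h : α → E}, MemLp h 2 μ → Integrable (fun x => ‖h x‖ ^ 2) μ :=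
    fun hh => (memLp_two_iff_integrable_sq_norm hh.1).1 hh
  have hcross : μ[fun x => 2 * ⟪g x, f x - (μ[f | m']) x⟫_ℝ | m] =ᵐ[μ] 0 := by
    filter_upwards [condExp_smul (2 : ℝ) (fun x => ⟪g x, f x - (μ[f | m']) x⟫_ℝ) m,
      (condExp_condExp_of_le hm hm').symm.trans
        (condExp_congr_ae (condExp_inner_sub_condExp_ae_eq_zero hm' hgm hg2 hf))] with x hx hx'
    rw [condExp_zero, Pi.zero_apply] at hx'
    exact hx.trans (by simp [hx'])
  have hpyth : (fun x => ‖f x - (μ[f | m]) x‖ ^ 2) = fun x =>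
      ‖f x - (μ[f | m']) x‖ ^ 2 + (2 * ⟪g x, f x - (μ[f | m']) x⟫_ℝ + ‖g x‖ ^ 2) := by
    funext x
    rw [← sub_add_sub_cancel (f x) ((μ[f | m']) x), norm_add_sq_real, real_inner_comm]
    simp only [g, Pi.sub_apply]
    ring
  rw [condVarNorm, hpyth]
  filter_upwards [condExp_add (hsq hr2) (((hg2.integrable_inner hr2).const_mul 2).add (hsq hg2)) m,
    condExp_add ((hg2.integrable_inner hr2).const_mul 2) (hsq hg2) m, hcross,
    condExp_condExp_of_le (f := fun x => ‖f x - (μ[f | m']) x‖ ^ 2) hm hm'] with x h₁ h₂ h₃ h₄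
  refine h₁.trans ?_
  simp only [Pi.sub_apply, Pi.add_apply] at h₂ h₃ ⊢
  rw [h₂, h₃, Pi.zero_apply, zero_add, condVarNorm, h₄]
  rfl

theorem integral_condVarNorm_le_of_le (hm : m ≤ m') (hm' : m' ≤ m0) {f : α → E}
    (hf : MemLp f 2 μ) : ∫ x, condVarNorm m' f μ x ∂μ ≤ ∫ x, condVarNorm m f μ x ∂μ := by
  have hm0 : m ≤ m0 := hm.trans hm'
  rw [integral_congr_ae (condVarNorm_ae_eq_condExp_condVarNorm_add hm hm' hf),
    integral_add integrable_condExp integrable_condExp, integral_condExp hm0,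
    integral_condExp hm0]
  exact le_add_of_nonneg_right (integral_nonneg fun x => by positivity)

end

section

variable {α E F : Type*} [NormedAddCommGroup E] [NormedSpace ℝ E] [CompleteSpace E]
  [NormedAddCommGroup F] [NormedSpace ℝ F] [CompleteSpace F]
  {m m₂ mA m0 : MeasurableSpace α} {μ : Measure α} [IsFiniteMeasure μ]

theorem condVarNorm_apply_sup_indep_eq (hmA : mA ≤ m0) (hm₂ : m₂ ≤ m0) (hm : m ≤ mA)
    (hind : Indep mA m₂ μ) {A : α → F →L[ℝ] E} {f : α → F}
    (hA : StronglyMeasurable[m₂] A) (hA_isom : ∀ x v, ‖A x v‖ = ‖v‖)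
    (hf : StronglyMeasurable[mA] f) (hfi : Integrable f μ) :
    condVarNorm (m ⊔ m₂) (fun x => A x (f x)) μ =ᵐ[μ] condVarNorm m f μ := by
  have hAf : Integrable (fun x => A x (f x)) μ :=
    hfi.norm.mono' ((ContinuousLinearMap.id ℝ (F →L[ℝ] E)).aestronglyMeasurable_comp₂
      (hA.mono hm₂).aestronglyMeasurable hfi.1) (ae_of_all _ fun x => (hA_isom x _).le)
  calc condVarNorm (m ⊔ m₂) (fun x => A x (f x)) μ
      =ᵐ[μ] μ[fun x => ‖f x - (μ[f | m]) x‖ ^ 2 | m ⊔ m₂] := by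
        refine condExp_congr_ae ?_
        filter_upwards [condExp_apply_sup_indep_eq hmA hm₂ hm hind hA hf hAf hfi] with x hx
        rw [hx, ← map_sub, hA_isom]
    _ =ᵐ[μ] condVarNorm m f μ :=
        condExp_sup_indep_eq hmA hm₂ hm hind
          ((hf.sub (stronglyMeasurable_condExp.mono hm)).norm.pow 2)

end

section

variable {Ω β γ δ : Type*} [mβ : MeasurableSpace β] [mγ : MeasurableSpace γ]
  [mδ : MeasurableSpace δ] {X : Ω → β} {Y : Ω → γ} {G : Ω → δ}

theorem MeasurableSpace.comap_sup_comap_le_of_measurable_comp {φ : δ × β → γ}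
    (hφ : Measurable φ) (hY : ∀ ω, Y ω = φ (G ω, X ω)) :
    MeasurableSpace.comap Y mγ ⊔ MeasurableSpace.comap G mδ
      ≤ MeasurableSpace.comap X mβ ⊔ MeasurableSpace.comap G mδ := by
  refine sup_le ?_ le_sup_right
  rw [funext hY]
  exact (hφ.comp (((comap_measurable G).mono le_sup_right le_rfl).prodMk
    ((comap_measurable X).mono le_sup_left le_rfl))).comap_le

theorem MeasurableSpace.comap_sup_comap_eq_of_measurable_comp {φ : δ × β → γ}
    {ψ : δ × γ → β} (hφ : Measurable φ) (hψ : Measurable ψ) (hY : ∀ ω, Y ω = φ (G ω, X ω))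
    (hX : ∀ ω, X ω = ψ (G ω, Y ω)) :
    MeasurableSpace.comap Y mγ ⊔ MeasurableSpace.comap G mδ
      = MeasurableSpace.comap X mβ ⊔ MeasurableSpace.comap G mδ :=
  le_antisymm (comap_sup_comap_le_of_measurable_comp hφ hY)
    (comap_sup_comap_le_of_measurable_comp hψ hX)

end

theorem condVarNorm_rep_apply_eq {Ω 𝒢 E : Type*} {mΩ : MeasurableSpace Ω} {μ : Measure Ω}
    [IsFiniteMeasure μ] [Group 𝒢] [TopologicalSpace 𝒢] [IsTopologicalGroup 𝒢]
    [MeasurableSpace 𝒢] [BorelSpace 𝒢] [NormedAddCommGroup E] [NormedSpace ℝ E]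
    [FiniteDimensional ℝ E] [MeasurableSpace E] [BorelSpace E] (ρ : 𝒢 →* (E ≃ₗᵢ[ℝ] E))
    (hρ : Continuous fun p : 𝒢 × E => ρ p.1 p.2) {G : Ω → 𝒢} (hG : Measurable G)
    {mA : MeasurableSpace Ω} (hmA : mA ≤ mΩ) (hind : Indep mA (.comap G inferInstance) μ)
    {X Δ : Ω → E} (hX : Measurable[mA] X) (hΔ : StronglyMeasurable[mA] Δ)
    (hΔi : Integrable Δ μ) :
    condVarNorm (.comap (fun ω => ρ (G ω) (X ω)) inferInstance ⊔ .comap G inferInstance)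
        (fun ω => ρ (G ω) (Δ ω)) μ
      =ᵐ[μ] condVarNorm (.comap X inferInstance) Δ μ := by
  have hσ : MeasurableSpace.comap (fun ω => ρ (G ω) (X ω)) inferInstance
      ⊔ .comap G inferInstance = .comap X inferInstance ⊔ .comap G inferInstance :=
    MeasurableSpace.comap_sup_comap_eq_of_measurable_comp hρ.measurable
      (hρ.measurable.comp (measurable_fst.inv.prodMk measurable_snd)) (fun _ => rfl)
      (fun ω => by
        show X ω = ρ (G ω)⁻¹ (ρ (G ω) (X ω))
        rw [map_inv]; exact ((ρ (G ω)).symm_apply_apply _).symm)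
  have hρclm : Continuous fun g => (ρ g).toContinuousLinearMap :=
    continuous_clm_apply.2 fun x => hρ.comp (continuous_id.prodMk continuous_const)
  have hρΔ : (fun ω => ρ (G ω) (Δ ω)) = fun ω => (ρ (G ω)).toContinuousLinearMap (Δ ω) := rfl
  rw [hσ, hρΔ]
  exact condVarNorm_apply_sup_indep_eq hmA hG.comap_le hX.comap_le hind
    (hρclm.measurable.comp (comap_measurable G)).stronglyMeasurable
    (fun ω x => (ρ (G ω)).norm_map x) hΔ hΔi

theorem stmt9_general {Ω : Type*} {mΩ : MeasurableSpace Ω} (μ : Measure Ω) [IsProbabilityMeasure μ]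
    {d : ℕ} {𝒢 : Type*} [Group 𝒢] [TopologicalSpace 𝒢] [IsTopologicalGroup 𝒢]
    [MeasurableSpace 𝒢] [BorelSpace 𝒢]
    (ρ : 𝒢 →* (EuclideanSpace ℝ (Fin d) ≃ₗᵢ[ℝ] EuclideanSpace ℝ (Fin d)))
    (hρcont : Continuous fun p : 𝒢 × EuclideanSpace ℝ (Fin d) => ρ p.1 p.2)
    (Grv : Ω → 𝒢) (hGrv : Measurable Grv)
    (Zt0 Zt1 : Ω → EuclideanSpace ℝ (Fin d))
    (hZt0m : Measurable Zt0) (hZt1m : Measurable Zt1)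
    (hZt0 : MemLp Zt0 2 μ) (hZt1 : MemLp Zt1 2 μ)
    (hindep : IndepFun Grv (fun ω => (Zt0 ω, Zt1 ω)) μ)
    (t : ℝ)
    (Zt Ztil U Δ : Ω → EuclideanSpace ℝ (Fin d))
    (hZt : ∀ ω, Zt ω = (1 - t) • ρ (Grv ω) (Zt0 ω) + t • ρ (Grv ω) (Zt1 ω))
    (hZtil : ∀ ω, Ztil ω = (1 - t) • Zt0 ω + t • Zt1 ω)
    (hU : ∀ ω, U ω = ρ (Grv ω) (Zt1 ω - Zt0 ω))
    (hΔ : ∀ ω, Δ ω = Zt1 ω - Zt0 ω)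
    (mZt mZtG mZtil : MeasurableSpace Ω)
    (hmZt : mZt = MeasurableSpace.comap Zt inferInstance)
    (hmZtG : mZtG = MeasurableSpace.comap Zt inferInstance
      ⊔ MeasurableSpace.comap Grv inferInstance)
    (hmZtil : mZtil = MeasurableSpace.comap Ztil inferInstance) :
    (μ[fun ω => ‖U ω - (μ[U | mZt]) ω‖ ^ 2 | mZt]
      =ᵐ[μ] fun ω =>
        (μ[μ[fun ω' => ‖Δ ω' - (μ[Δ | mZtil]) ω'‖ ^ 2 | mZtil] | mZt]) ω
        + (μ[fun ω' => ‖(μ[U | mZtG]) ω' - (μ[U | mZt]) ω'‖ ^ 2 | mZt]) ω) ∧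
    ∫ ω, ‖Δ ω - (μ[Δ | mZtil]) ω‖ ^ 2 ∂μ ≤ ∫ ω, ‖U ω - (μ[U | mZt]) ω‖ ^ 2 ∂μ := by
  subst hmZt hmZtG hmZtil
  obtain rfl : Zt = fun ω => ρ (Grv ω) (Ztil ω) := funext fun ω => by simp [hZt, hZtil]
  obtain rfl : U = fun ω => ρ (Grv ω) (Δ ω) := funext fun ω => by rw [hU, hΔ]
  set P := fun ω => (Zt0 ω, Zt1 ω)
  have hP : MeasurableSpace.comap P inferInstance ≤ mΩ := (hZt0m.prodMk hZt1m).comap_le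
  have hZtil_P : Measurable[.comap P inferInstance] Ztil := by
    rw [funext hZtil]
    exact (by fun_prop : Measurable fun p : EuclideanSpace ℝ (Fin d) × EuclideanSpace ℝ (Fin d) =>
      (1 - t) • p.1 + t • p.2).comp (comap_measurable P)
  have hΔ_P : Measurable[.comap P inferInstance] Δ := by
    rw [funext hΔ]; exact (measurable_snd.sub measurable_fst).comp (comap_measurable P)
  have hΔ2 : MemLp Δ 2 μ := by rw [funext hΔ]; exact hZt1.sub hZt0
  have hU2 : MemLp (fun ω => ρ (Grv ω) (Δ ω)) 2 μ :=
    hΔ2.of_le (hρcont.measurable.comp (hGrv.prodMk (hΔ_P.mono hP le_rfl))).aestronglyMeasurable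
      (ae_of_all _ fun ω => by simp)
  have hZt_le : MeasurableSpace.comap (fun ω => ρ (Grv ω) (Ztil ω)) inferInstance ≤ mΩ :=
    (hρcont.measurable.comp (hGrv.prodMk (hZtil_P.mono hP le_rfl))).comap_le
  have hZtG_le := sup_le hZt_le hGrv.comap_le
  have hvar := condVarNorm_rep_apply_eq ρ hρcont hGrv hP
    ((IndepFun_iff_Indep _ _ _).1 hindep.symm) hZtil_P hΔ_P.stronglyMeasurable
    (hΔ2.integrable one_le_two)
  refine ⟨?_, ?_⟩
  · filter_upwards [condVarNorm_ae_eq_condExp_condVarNorm_add le_sup_left hZtG_le hU2,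
      condExp_congr_ae hvar] with ω h₁ h₂
    exact h₁.trans (by rw [h₂]; rfl)
  · calc ∫ ω, ‖Δ ω - (μ[Δ | .comap Ztil inferInstance]) ω‖ ^ 2 ∂μ
        = ∫ ω, condVarNorm _ (fun ω => ρ (Grv ω) (Δ ω)) μ ω ∂μ :=
          (integral_condExp (hZtil_P.mono hP le_rfl).comap_le).symm.trans
            (integral_congr_ae hvar.symm)
      _ ≤ ∫ ω, condVarNorm _ (fun ω => ρ (Grv ω) (Δ ω)) μ ω ∂μ :=
          integral_condVarNorm_le_of_le le_sup_left hZtG_le hU2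
      _ = _ := integral_condExp hZt_le

/-- variance decomposition under the group-aligned lift. With
`G ~ λ` (Haar, i.e. left-invariant probability on a compact group) independent
of the square-integrable pair `(Z̃₀, Z̃₁)`, `Z_t = (1−t)G⬝Z̃₀ + tG⬝Z̃₁`,
`Z̃_t = (1−t)Z̃₀ + tZ̃₁`, `U = G⬝(Z̃₁−Z̃₀)`, `Δ = Z̃₁−Z̃₀`, one has a.s.
`Var(U|Z_t) = E[Var(Δ|Z̃_t)|Z_t] + Var(E[U|Z_t,G]|Z_t)`, and consequently
`E[Var(U|Z_t)] ≥ E[Var(Δ|Z̃_t)]`. -/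
theorem stmt9 {Ω : Type*} {mΩ : MeasurableSpace Ω} (μ : Measure Ω) [IsProbabilityMeasure μ]
    {d : ℕ} {𝒢 : Type*} [Group 𝒢] [TopologicalSpace 𝒢] [IsTopologicalGroup 𝒢]
    [CompactSpace 𝒢] [MeasurableSpace 𝒢] [BorelSpace 𝒢]
    (lam : Measure 𝒢) [IsProbabilityMeasure lam] [lam.IsMulLeftInvariant]
    (ρ : 𝒢 →* (EuclideanSpace ℝ (Fin d) ≃ₗᵢ[ℝ] EuclideanSpace ℝ (Fin d)))
    (hρcont : Continuous fun p : 𝒢 × EuclideanSpace ℝ (Fin d) => ρ p.1 p.2)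
    (Grv : Ω → 𝒢) (hGrv : Measurable Grv) (hGlaw : Measure.map Grv μ = lam)
    (Zt0 Zt1 : Ω → EuclideanSpace ℝ (Fin d))
    (hZt0m : Measurable Zt0) (hZt1m : Measurable Zt1)
    (hZt0 : MemLp Zt0 2 μ) (hZt1 : MemLp Zt1 2 μ)
    (hindep : IndepFun Grv (fun ω => (Zt0 ω, Zt1 ω)) μ)
    (t : ℝ) (ht : t ∈ Set.Icc (0 : ℝ) 1)
    (Zt Ztil U Δ : Ω → EuclideanSpace ℝ (Fin d))
    (hZt : ∀ ω, Zt ω = (1 - t) • ρ (Grv ω) (Zt0 ω) + t • ρ (Grv ω) (Zt1 ω))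
    (hZtil : ∀ ω, Ztil ω = (1 - t) • Zt0 ω + t • Zt1 ω)
    (hU : ∀ ω, U ω = ρ (Grv ω) (Zt1 ω - Zt0 ω))
    (hΔ : ∀ ω, Δ ω = Zt1 ω - Zt0 ω)
    (mZt mZtG mZtil : MeasurableSpace Ω)
    (hmZt : mZt = MeasurableSpace.comap Zt inferInstance)
    (hmZtG : mZtG = MeasurableSpace.comap Zt inferInstance
      ⊔ MeasurableSpace.comap Grv inferInstance)
    (hmZtil : mZtil = MeasurableSpace.comap Ztil inferInstance) :
    (μ[fun ω => ‖U ω - (μ[U | mZt]) ω‖ ^ 2 | mZt]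
      =ᵐ[μ] fun ω =>
        (μ[μ[fun ω' => ‖Δ ω' - (μ[Δ | mZtil]) ω'‖ ^ 2 | mZtil] | mZt]) ω
        + (μ[fun ω' => ‖(μ[U | mZtG]) ω' - (μ[U | mZt]) ω'‖ ^ 2 | mZt]) ω) ∧
    ∫ ω, ‖Δ ω - (μ[Δ | mZtil]) ω‖ ^ 2 ∂μ ≤ ∫ ω, ‖U ω - (μ[U | mZt]) ω‖ ^ 2 ∂μ :=
  stmt9_general (mΩ := mΩ) μ ρ hρcont Grv hGrv Zt0 Zt1 hZt0m hZt1m hZt0 hZt1 hindep t Zt Ztil U Δ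
    hZt hZtil hU hΔ mZt mZtG mZtil hmZt hmZtG hmZtil
end

section
/- Let a group G act measurably and orthogonally on ℝ^d, and let (Z, U) be a pair of square-integrable ℝ^d-valued random vectors whose joint law is diagonal-invariant: (g·Z, g·U) has the same law as (Z, U) for every g ∈ G. Then the conditional expectation v*(z) = E[U | Z = z] is G-equivariant: v*(g·z) = g·v*(z) for (law of Z)-almost every z and every g ∈ G. -/
/-!
If `v` is a version of `E[U | Z = ·]` and `(S Z, T U)` has the law of `(Z, U)`, then for every
measurable `A`, with `ν` the law of `Z`,
`∫_{S⁻¹A} T ∘ v dν = E[T U; S Z ∈ A] = E[U; Z ∈ A] = ∫_A v dν = ∫_{S⁻¹A} v ∘ S dν`,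
the second step by the invariance of the joint law and the last by the invariance of `ν`.
The sets `S⁻¹A` exhaust the measurable sets, so `v ∘ S = T ∘ v` holds `ν`-almost everywhere.
-/

open MeasureTheory Set

section

variable {Ω α E : Type*} [MeasurableSpace Ω] [MeasurableSpace α]
  [NormedAddCommGroup E] [NormedSpace ℝ E] [MeasurableSpace E] [BorelSpace E]
  [SecondCountableTopology E]

lemma setIntegral_preimage_eq_setIntegral_map_prod {μ : Measure Ω} {X : Ω → α} {Y : Ω → E}
    (hXY : AEMeasurable (fun ω => (X ω, Y ω)) μ) {A : Set α} (hA : MeasurableSet A) :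
    ∫ ω in X ⁻¹' A, Y ω ∂μ = ∫ p in A ×ˢ univ, p.2 ∂(μ.map fun ω => (X ω, Y ω)) := by
  rw [setIntegral_map (hA.prod MeasurableSet.univ)
    measurable_snd.stronglyMeasurable.aestronglyMeasurable hXY, mk_preimage_prod, preimage_univ,
    inter_univ]

lemma setIntegral_preimage_eq_of_map_prod_eq {μ μ' : Measure Ω} {X X' : Ω → α} {Y Y' : Ω → E}
    (hXY : AEMeasurable (fun ω => (X ω, Y ω)) μ) (hXY' : AEMeasurable (fun ω => (X' ω, Y' ω)) μ')
    (hlaw : μ.map (fun ω => (X ω, Y ω)) = μ'.map (fun ω => (X' ω, Y' ω)))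
    {A : Set α} (hA : MeasurableSet A) :
    ∫ ω in X ⁻¹' A, Y ω ∂μ = ∫ ω in X' ⁻¹' A, Y' ω ∂μ' := by
  rw [setIntegral_preimage_eq_setIntegral_map_prod hXY hA,
    setIntegral_preimage_eq_setIntegral_map_prod hXY' hA, hlaw]

variable [CompleteSpace E]

theorem ae_equivariant_of_map_prod_eq {μ : Measure Ω} [IsFiniteMeasure μ] {Z : Ω → α} {U : Ω → E}
    (hZ : Measurable Z) (hU : Measurable U) (S : α ≃ᵐ α) (T : E ≃L[ℝ] E)
    (hlaw : μ.map (fun ω => (S (Z ω), T (U ω))) = μ.map (fun ω => (Z ω, U ω)))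
    {v : α → E} (hv_meas : Measurable v) (hv_int : Integrable (fun ω => v (Z ω)) μ)
    (hv : ∀ A, MeasurableSet A → ∫ ω in Z ⁻¹' A, U ω ∂μ = ∫ ω in Z ⁻¹' A, v (Z ω) ∂μ) :
    ∀ᵐ z ∂(μ.map Z), v (S z) = T (v z) := by
  set ν := μ.map Z
  have hT : Measurable T := T.continuous.measurable
  have hSZ_TU : Measurable fun ω => (S (Z ω), T (U ω)) := (S.measurable.comp hZ).prodMk (hT.comp hU)
  have hν_inv : ν.map S = ν := by
    have := congrArg (Measure.map Prod.fst) hlaw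
    rw [Measure.map_map measurable_fst hSZ_TU,
      Measure.map_map measurable_fst (hZ.prodMk hU)] at this
    rw [Measure.map_map S.measurable hZ]
    exact this
  have hv_cond : ∀ A, MeasurableSet A → ∫ ω in Z ⁻¹' A, U ω ∂μ = ∫ z in A, v z ∂ν :=
    fun A hA => by rw [hv A hA, setIntegral_map hA hv_meas.aestronglyMeasurable hZ.aemeasurable]
  have hv_int_ν : Integrable v ν :=
    (integrable_map_measure hv_meas.aestronglyMeasurable hZ.aemeasurable).mpr hv_int
  have hvS_int : Integrable (v ∘ S) ν := (integrable_map_equiv S v).mp (by rwa [hν_inv])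
  have hset : ∀ A, MeasurableSet A → ∫ z in S ⁻¹' A, v (S z) ∂ν = ∫ z in S ⁻¹' A, T (v z) ∂ν :=
    fun A hA => calc
      ∫ z in S ⁻¹' A, v (S z) ∂ν = ∫ z in A, v z ∂ν := by
        rw [← S.measurableEmbedding.setIntegral_map, hν_inv]
      _ = ∫ ω in (fun ω => S (Z ω)) ⁻¹' A, T (U ω) ∂μ := by
        rw [← hv_cond A hA, setIntegral_preimage_eq_of_map_prod_eq (hZ.prodMk hU).aemeasurable
          hSZ_TU.aemeasurable hlaw.symm hA]
      _ = T (∫ z in S ⁻¹' A, v z ∂ν) := by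
        rw [T.integral_comp_comm, ← hv_cond _ (S.measurable hA)]
        rfl
      _ = ∫ z in S ⁻¹' A, T (v z) ∂ν := (T.integral_comp_comm _).symm
  refine ae_eq_of_forall_setIntegral_eq_of_sigmaFinite (fun _ _ _ => hvS_int.integrableOn)
    (fun _ _ _ => (T.toContinuousLinearMap.integrable_comp hv_int_ν).integrableOn) fun B hB _ => ?_
  have := hset (S.symm ⁻¹' B) (S.symm.measurable hB)
  rwa [← S.image_eq_preimage_symm, S.preimage_image] at this

end

theorem stmt17_general {Ω : Type*} [MeasurableSpace Ω] (μ : Measure Ω) [IsProbabilityMeasure μ]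
    {d : ℕ} {𝒢 : Type*} [Group 𝒢]
    (ρ : 𝒢 →* (EuclideanSpace ℝ (Fin d) ≃ₗᵢ[ℝ] EuclideanSpace ℝ (Fin d)))
    (Z U : Ω → EuclideanSpace ℝ (Fin d))
    (hZmeas : Measurable Z) (hUmeas : Measurable U)
    (hdiag : ∀ g : 𝒢,
      Measure.map (fun ω => (ρ g (Z ω), ρ g (U ω))) μ
        = Measure.map (fun ω => (Z ω, U ω)) μ)
    (v : EuclideanSpace ℝ (Fin d) → EuclideanSpace ℝ (Fin d)) (hvmeas : Measurable v)
    (hvint : Integrable (fun ω => v (Z ω)) μ)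
    (hv : ∀ A : Set (EuclideanSpace ℝ (Fin d)), MeasurableSet A →
      ∫ ω in Z ⁻¹' A, U ω ∂μ = ∫ ω in Z ⁻¹' A, v (Z ω) ∂μ) :
    ∀ g : 𝒢, ∀ᵐ z ∂(Measure.map Z μ), v (ρ g z) = ρ g (v z) := fun g =>
  ae_equivariant_of_map_prod_eq hZmeas hUmeas (ρ g).toHomeomorph.toMeasurableEquiv
    (ρ g).toContinuousLinearEquiv (hdiag g) hvmeas hvint hv

/-- if the joint law of `(Z, U)` is invariant under the diagonal
orthogonal action of a group `𝒢` (acting through linear isometries `ρ`), then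
any version `v` of the conditional expectation `E[U | Z = ·]` is
`𝒢`-equivariant almost everywhere w.r.t. the law of `Z`. -/
theorem stmt17 {Ω : Type*} [MeasurableSpace Ω] (μ : Measure Ω) [IsProbabilityMeasure μ]
    {d : ℕ} {𝒢 : Type*} [Group 𝒢]
    (ρ : 𝒢 →* (EuclideanSpace ℝ (Fin d) ≃ₗᵢ[ℝ] EuclideanSpace ℝ (Fin d)))
    (Z U : Ω → EuclideanSpace ℝ (Fin d))
    (hZmeas : Measurable Z) (hUmeas : Measurable U)
    (hZ : MemLp Z 2 μ) (hU : MemLp U 2 μ)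
    (hdiag : ∀ g : 𝒢,
      Measure.map (fun ω => (ρ g (Z ω), ρ g (U ω))) μ
        = Measure.map (fun ω => (Z ω, U ω)) μ)
    (v : EuclideanSpace ℝ (Fin d) → EuclideanSpace ℝ (Fin d)) (hvmeas : Measurable v)
    (hvint : Integrable (fun ω => v (Z ω)) μ)
    (hv : ∀ A : Set (EuclideanSpace ℝ (Fin d)), MeasurableSet A →
      ∫ ω in Z ⁻¹' A, U ω ∂μ = ∫ ω in Z ⁻¹' A, v (Z ω) ∂μ) :
    ∀ g : 𝒢, ∀ᵐ z ∂(Measure.map Z μ), v (ρ g z) = ρ g (v z) :=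
  stmt17_general μ ρ Z U hZmeas hUmeas hdiag v hvmeas hvint hv
end
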